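/- Let I be a pq instance, x a variable, a ∈ A_x, and p, q path-patterns that are cycles at x in I. Then there exists k such that for every j ≥ k, a ∈ {a} + j(p+q) + p; in particular a single j can be chosen that works simultaneously for all a ∈ A_x. Moreover the sequence {a}, {a}+(p+q), {a}+2(p+q), … stabilises at a set A′ with a ∈ A′ and A′ + p = A′. -/
import Mathlib


/-!
Common framework: finitary universal algebra (signatures, algebras, terms,
subuniverses, absorption, congruences, SD(∧) varieties), CSP instances
(constraints, potatoes, solutions, 1-consistency, restriction, arc consistency),
path- and tree-patterns with their propagation, SLAC and pq consistency,
and relational structures (templates, rigid cores, polymorphisms, bounded width).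
-/

namespace BW

/-! ### Universal algebra -/

/-- An algebraic signature: operation symbols with arities. -/
structure Signature : Type 1 where
  ops : Type
  arity : ops → ℕ

/-- An algebra in signature `σ` with carrier `A`. -/
structure AlgebraOn (σ : Signature) (A : Type) : Type where
  interp : ∀ f : σ.ops, (Fin (σ.arity f) → A) → A

/-- Product of a family of algebras (operations computed coordinatewise). -/
def AlgebraOn.pi {σ : Signature} {ι : Type} {A : ι → Type}
    (alg : ∀ i, AlgebraOn σ (A i)) : AlgebraOn σ (∀ i, A i) where
  interp f args i := (alg i).interp f fun k => args k i

/-- Power of an algebra. -/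
def AlgebraOn.power {σ : Signature} {A : Type} (alg : AlgebraOn σ A) (J : Type) :
    AlgebraOn σ (J → A) :=
  AlgebraOn.pi fun _ : J => alg

/-- Binary product of two algebras. -/
def AlgebraOn.prod {σ : Signature} {A B : Type} (algA : AlgebraOn σ A)
    (algB : AlgebraOn σ B) : AlgebraOn σ (A × B) where
  interp f args := (algA.interp f fun k => (args k).1, algB.interp f fun k => (args k).2)

/-- Terms over a signature with variables in `V`. -/
inductive Trm (σ : Signature) (V : Type) : Type
  | var : V → Trm σ V
  | app : ∀ f : σ.ops, (Fin (σ.arity f) → Trm σ V) → Trm σ V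

/-- Evaluation of a term in an algebra under a valuation of the variables:
this gives the term operations of the algebra. -/
def Trm.eval {σ : Signature} {A : Type} (alg : AlgebraOn σ A) {V : Type} :
    Trm σ V → (V → A) → A
  | .var v, e => e v
  | .app f ts, e => alg.interp f fun k => (ts k).eval alg e

/-- A subuniverse: a subset closed under all (basic, hence all term) operations. -/
def Subuniverse {σ : Signature} {A : Type} (alg : AlgebraOn σ A) (S : Set A) : Prop :=
  ∀ (f : σ.ops) (args : Fin (σ.arity f) → A), (∀ k, args k ∈ S) → alg.interp f args ∈ S

/-- Idempotency: every singleton is a subalgebra. -/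
def Idempotent {σ : Signature} {A : Type} (alg : AlgebraOn σ A) : Prop :=
  ∀ (f : σ.ops) (a : A), alg.interp f (fun _ => a) = a

/-- `B` absorbs `C`, written `B ◁ C`: both are subuniverses (`B` nonempty,
as subalgebras have nonempty universes), `B ⊆ C`, and there is a term operation `t`
with `t(a_1,…,a_n) ∈ B` whenever all `a_i ∈ C` and at most one `a_i` lies outside `B`. -/
def Absorbs {σ : Signature} {A : Type} (alg : AlgebraOn σ A) (B C : Set A) : Prop :=
  B.Nonempty ∧ B ⊆ C ∧ Subuniverse alg B ∧ Subuniverse alg C ∧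
    ∃ (n : ℕ) (t : Trm σ (Fin n)), ∀ args : Fin n → A,
      (∀ k, args k ∈ C) → {k | args k ∉ B}.Subsingleton → t.eval alg args ∈ B

/-- `S` has no proper absorbing subuniverse: the only absorbing subuniverse is `S`. -/
def NoProperAbsorbing {σ : Signature} {A : Type} (alg : AlgebraOn σ A) (S : Set A) :
    Prop :=
  ∀ B : Set A, Absorbs alg B S → B = S

/-- A congruence of the subalgebra of `alg` with universe `S`: an equivalence
relation on `S` (encoded as a relation on `A` supported on `S`) which is a
subalgebra of the square, i.e. compatible with all operations. -/
structure IsCongruence {σ : Signature} {A : Type} (alg : AlgebraOn σ A) (S : Set A)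
    (r : A → A → Prop) : Prop where
  mem_left : ∀ {a b}, r a b → a ∈ S
  mem_right : ∀ {a b}, r a b → b ∈ S
  refl : ∀ a ∈ S, r a a
  symm : ∀ {a b}, r a b → r b a
  trans : ∀ {a b c}, r a b → r b c → r a c
  compat : ∀ (f : σ.ops) (args args' : Fin (σ.arity f) → A),
    (∀ k, r (args k) (args' k)) → r (alg.interp f args) (alg.interp f args')

/-- Join of two congruences: the transitive closure of their union. -/
def congJoin {A : Type} (r s : A → A → Prop) : A → A → Prop :=
  Relation.TransGen fun a b => r a b ∨ s a b

/-- The congruence lattice of the subalgebra on `S` satisfies meet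
semidistributivity: `α∧β = α∧γ → α∧β = α∧(β∨γ)`. -/
def SDMeetCon {σ : Signature} {A : Type} (alg : AlgebraOn σ A) (S : Set A) : Prop :=
  ∀ α β γ : A → A → Prop, IsCongruence alg S α → IsCongruence alg S β →
    IsCongruence alg S γ →
    (∀ a b, α a b ∧ β a b ↔ α a b ∧ γ a b) →
    ∀ a b, α a b ∧ β a b ↔ α a b ∧ congJoin β γ a b

/-- The family `alg` lies in (equivalently, generates) a congruence meet
semidistributive variety: every subalgebra of a product of members of the family
satisfies SD(∧) for its congruence lattice.  (Congruence lattices of quotients are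
intervals in congruence lattices of subalgebras of products, and SD(∧) is inherited
by sublattices, so this captures all members of the generated variety `HSP`.) -/
def FamInSDMeetVariety {σ : Signature} {ι : Type} {A : ι → Type}
    (alg : ∀ i, AlgebraOn σ (A i)) : Prop :=
  ∀ (J : Type) (f : J → ι) (S : Set (∀ j, A (f j))),
    Subuniverse (AlgebraOn.pi fun j => alg (f j)) S →
    SDMeetCon (AlgebraOn.pi fun j => alg (f j)) S

/-- A single algebra generating/lying in an SD(∧) variety. -/
def InSDMeetVariety {σ : Signature} {A : Type} (alg : AlgebraOn σ A) : Prop :=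
  FamInSDMeetVariety fun _ : Unit => alg

/-- A subdirect subalgebra of a product: a subuniverse projecting onto every factor. -/
def Subdirect {σ : Signature} {ι : Type} {A : ι → Type} (alg : ∀ i, AlgebraOn σ (A i))
    (R : Set (∀ i, A i)) : Prop :=
  Subuniverse (AlgebraOn.pi alg) R ∧ ∀ (i : ι) (a : A i), ∃ r ∈ R, r i = a

/-- Simplicity of the subalgebra on `S`: its only congruences are the equality
congruence `0_S` and the full congruence `1_S`. -/
def SimpleOn {σ : Signature} {A : Type} (alg : AlgebraOn σ A) (S : Set A) : Prop :=
  ∀ r : A → A → Prop, IsCongruence alg S r →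
    (∀ a b, r a b ↔ a ∈ S ∧ b ∈ S ∧ a = b) ∨ ∀ a b, r a b ↔ a ∈ S ∧ b ∈ S

/-- The quotient of the subalgebra on `S` by the congruence `α` is simple:
the only congruences above `α` are `α` and the full congruence. -/
def QuotSimpleOn {σ : Signature} {A : Type} (alg : AlgebraOn σ A) (S : Set A)
    (α : A → A → Prop) : Prop :=
  ∀ β : A → A → Prop, IsCongruence alg S β → (∀ a b, α a b → β a b) →
    (∀ a b, β a b ↔ α a b) ∨ ∀ a b, β a b ↔ a ∈ S ∧ b ∈ S

/-- A subdirect binary relation is linked if the transitive closure of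
"sharing a right neighbour" is the full relation on the left side. -/
def Linked {A B : Type} (C : Set (A × B)) : Prop :=
  ∀ a a' : A, Relation.TransGen (fun u v : A => ∃ b : B, (u, b) ∈ C ∧ (v, b) ∈ C) a a'

/-! ### CSP instances -/

/-- An instance of the CSP over a domain `A`: variables, constraints (a scope of
variables together with a relation), and for every variable `x` a unary constraint
`(x, A_x)` — the potato of `x`. -/
structure Inst (A : Type) : Type 1 where
  Var : Type
  Cons : Type
  arity : Cons → ℕ
  scope : ∀ c, Fin (arity c) → Var
  rel : ∀ c, Set (Fin (arity c) → A)
  potato : Var → Set A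

/-- A solution of an instance: an evaluation of the variables satisfying all
constraints, including the unary constraints `(x, A_x)`. -/
def Inst.Solution {A : Type} (I : Inst A) (f : I.Var → A) : Prop :=
  (∀ x, f x ∈ I.potato x) ∧ ∀ c, (fun i => f (I.scope c i)) ∈ I.rel c

/-- The instance is over the template whose polymorphism algebra is `alg`:
all constraint relations and potatoes are invariant under `alg`
(pp-definable relations are such, by the Galois correspondence). -/
def Inst.Over {A : Type} {σ : Signature} (I : Inst A) (alg : AlgebraOn σ A) : Prop :=
  (∀ c, Subuniverse (alg.power (Fin (I.arity c))) (I.rel c)) ∧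
    ∀ x, Subuniverse alg (I.potato x)

/-- 1-consistency: every constraint relation projects at its `i`-th coordinate
exactly onto the potato of the `i`-th variable of its scope. -/
def Inst.OneConsistent {A : Type} (I : Inst A) : Prop :=
  ∀ (c : I.Cons) (i : Fin (I.arity c)),
    (fun t => t i) '' I.rel c = I.potato (I.scope c i)

/-- Restriction of an instance by a system of subsets, one for each variable. -/
def Inst.restrict {A : Type} (I : Inst A) (P : I.Var → Set A) : Inst A :=
  { I with
    rel := fun c => {t ∈ I.rel c | ∀ i, t i ∈ P (I.scope c i)}
    potato := fun x => I.potato x ∩ P x }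

/-- Arc consistency: restricting the instance by its potatoes yields a
1-consistent instance. -/
def Inst.ArcConsistent {A : Type} (I : Inst A) : Prop :=
  (I.restrict I.potato).OneConsistent

/-- A step in an instance: a constraint with a selected beginning coordinate and a
selected end coordinate.  (This is the image of an abstract one-constraint step
pattern under a homomorphism into the instance.) -/
structure Step {A : Type} (I : Inst A) : Type where
  c : I.Cons
  inIdx : Fin (I.arity c)
  outIdx : Fin (I.arity c)

def Step.src {A : Type} {I : Inst A} (s : Step I) : I.Var := I.scope s.c s.inIdx

def Step.dst {A : Type} {I : Inst A} (s : Step I) : I.Var := I.scope s.c s.outIdx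

/-- A path-pattern in the instance `I` (i.e. an abstract path-pattern together with
a homomorphism to `I`): a nonempty sequence of steps in `I`, the end variable of
each step being the beginning variable of the next one. -/
structure PathIn {A : Type} (I : Inst A) : Type where
  len : ℕ
  pos : 0 < len
  step : Fin len → Step I
  chain : ∀ (k : ℕ) (h : k + 1 < len),
    (step ⟨k, Nat.lt_of_succ_lt h⟩).dst = (step ⟨k + 1, h⟩).src

namespace PathIn

variable {A : Type} {I : Inst A}

/-- The variable of `I` to which the beginning of the path-pattern is mapped. -/
def src (p : PathIn I) : I.Var := (p.step ⟨0, p.pos⟩).src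

/-- The variable of `I` to which the end of the path-pattern is mapped. -/
def dst (p : PathIn I) : I.Var :=
  (p.step ⟨p.len - 1, Nat.sub_lt p.pos Nat.one_pos⟩).dst

/-- A run along the path-pattern: a solution of the underlying instance of the
pattern (a tuple from each constraint relation, consecutive steps agreeing at the
shared variable, all values inside the potatoes). -/
def IsRun (p : PathIn I) (t : ∀ k : Fin p.len, Fin (I.arity (p.step k).c) → A) : Prop :=
  (∀ k, t k ∈ I.rel (p.step k).c) ∧
  (∀ (k : Fin p.len) (i : Fin (I.arity (p.step k).c)),
    t k i ∈ I.potato (I.scope (p.step k).c i)) ∧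
  ∀ (k : ℕ) (h : k + 1 < p.len),
    t ⟨k, Nat.lt_of_succ_lt h⟩ (p.step ⟨k, Nat.lt_of_succ_lt h⟩).outIdx =
      t ⟨k + 1, h⟩ (p.step ⟨k + 1, h⟩).inIdx

/-- The value a run gives to the beginning variable of the pattern. -/
def first (p : PathIn I) (t : ∀ k : Fin p.len, Fin (I.arity (p.step k).c) → A) : A :=
  t ⟨0, p.pos⟩ (p.step ⟨0, p.pos⟩).inIdx

/-- The value a run gives to the end variable of the pattern. -/
def last (p : PathIn I) (t : ∀ k : Fin p.len, Fin (I.arity (p.step k).c) → A) : A :=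
  t ⟨p.len - 1, Nat.sub_lt p.pos Nat.one_pos⟩
    (p.step ⟨p.len - 1, Nat.sub_lt p.pos Nat.one_pos⟩).outIdx

/-- Propagation `B + p`: all values given to the end of `p` by solutions of `p`
sending the beginning into `B`. -/
def fwd (p : PathIn I) (B : Set A) : Set A :=
  {b | ∃ t, p.IsRun t ∧ p.first t ∈ B ∧ p.last t = b}

/-- Propagation `B − p = B + (−p)` along the reversed pattern: all values given to
the beginning of `p` by solutions of `p` sending the end into `B`. -/
def bwd (p : PathIn I) (B : Set A) : Set A :=
  {b | ∃ t, p.IsRun t ∧ p.last t ∈ B ∧ p.first t = b}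

/-- The projection of the set of solutions of `p` to the pair
(beginning variable, end variable). -/
def pairs (p : PathIn I) : Set (A × A) :=
  {ab | ∃ t, p.IsRun t ∧ p.first t = ab.1 ∧ p.last t = ab.2}

end PathIn

/-- A SLAC instance: it is 1-consistent (with nonempty potatoes, as produced by a
non-failing run of the SLAC algorithm) and, for every variable `x`, every
`a ∈ A_x`, and every path-pattern `p` which is a cycle at `x` in the instance,
`p` has a solution sending both its beginning and its end to `a`. -/
def Inst.SLAC {A : Type} (I : Inst A) : Prop :=
  I.OneConsistent ∧ (∀ x, (I.potato x).Nonempty) ∧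
    ∀ (x : I.Var) (p : PathIn I), p.src = x → p.dst = x →
      ∀ a ∈ I.potato x, (a, a) ∈ p.pairs

/-- A pq instance: an arc-consistent instance (with nonempty potatoes) such that
for every variable `x`, every `a ∈ A_x` and every two cycles `p`, `q` at `x`,
there is `j` with `a ∈ {a} + j(p+q) + p`. -/
def Inst.PQ {A : Type} (I : Inst A) : Prop :=
  I.ArcConsistent ∧ (∀ x, (I.potato x).Nonempty) ∧
    ∀ (x : I.Var) (p q : PathIn I), p.src = x → p.dst = x → q.src = x → q.dst = x →
      ∀ a ∈ I.potato x, ∃ j : ℕ,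
        a ∈ p.fwd ((fun S => q.fwd (p.fwd S))^[j] ({a} : Set A))

/-- The relation induced on the potato of the end variable of `p` by a congruence
`αx` at the beginning variable: `b ~ b'` iff there are `a α_x a'` with
`b ∈ {a} + p` and `b' ∈ {a'} + p`. -/
def inducedRel {A : Type} {I : Inst A} (αx : A → A → Prop) (p : PathIn I)
    (b b' : A) : Prop :=
  ∃ a a', αx a a' ∧ b ∈ p.fwd {a} ∧ b' ∈ p.fwd {a'}

/-- A (rooted) tree-pattern in the instance `I` (an abstract tree-pattern together
with a homomorphism into `I`): either a single variable which is a selected leaf,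
or a single variable which is not a leaf, or a constraint of `I` whose `j`-th
coordinate is the root, with a tree-pattern hanging at every other coordinate. -/
inductive TreeIn {A : Type} (I : Inst A) : I.Var → Type
  | leaf (x : I.Var) : TreeIn I x
  | free (x : I.Var) : TreeIn I x
  | node (c : I.Cons) (j : Fin (I.arity c))
      (sub : ∀ i : Fin (I.arity c), i ≠ j → TreeIn I (I.scope c i)) :
      TreeIn I (I.scope c j)

/-- All (selected) leaves of the tree-pattern are mapped to the variable `x`. -/
def TreeIn.LeavesAt {A : Type} {I : Inst A} (x : I.Var) :
    ∀ {v : I.Var}, TreeIn I v → Prop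
  | _, .leaf y => y = x
  | _, .free _ => True
  | _, .node c j sub => ∀ (i : Fin (I.arity c)) (h : i ≠ j), (sub i h).LeavesAt x

/-- Propagation `B + p` for a tree-pattern `p`: the set of values given to the root
by solutions of the pattern sending all the (selected) leaves into `B`. -/
def TreeIn.fwd {A : Type} {I : Inst A} (B : Set A) :
    ∀ {v : I.Var}, TreeIn I v → Set A
  | _, .leaf y => B ∩ I.potato y
  | _, .free y => I.potato y
  | _, .node c j sub =>
      {a | a ∈ I.potato (I.scope c j) ∧ ∃ t ∈ I.rel c,
        (∀ i, t i ∈ I.potato (I.scope c i)) ∧ t j = a ∧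
          ∀ (i : Fin (I.arity c)) (h : i ≠ j), t i ∈ (sub i h).fwd B}

/-- The set of values given to the root by solutions of the tree-pattern sending
*every* variable `u` of the pattern into `P (φ u)`. -/
def TreeIn.solSet {A : Type} {I : Inst A} (P : I.Var → Set A) :
    ∀ {v : I.Var}, TreeIn I v → Set A
  | _, .leaf y => I.potato y ∩ P y
  | _, .free y => I.potato y ∩ P y
  | _, .node c j sub =>
      {a | a ∈ I.potato (I.scope c j) ∩ P (I.scope c j) ∧ ∃ t ∈ I.rel c,
        (∀ i, t i ∈ I.potato (I.scope c i) ∩ P (I.scope c i)) ∧ t j = a ∧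
          ∀ (i : Fin (I.arity c)) (h : i ≠ j), t i ∈ (sub i h).solSet P}

/-! ### Relational structures (templates) -/

/-- A relational signature. -/
structure RelSig : Type 1 where
  RelIdx : Type
  arity : RelIdx → ℕ

/-- A relational structure in the signature `ρ`. -/
structure RelStructOn (ρ : RelSig) : Type 1 where
  carrier : Type
  rel : ∀ r : ρ.RelIdx, Set (Fin (ρ.arity r) → carrier)

/-- A homomorphism of relational structures. -/
def RelHom {ρ : RelSig} (AA BB : RelStructOn ρ) (h : AA.carrier → BB.carrier) : Prop :=
  ∀ (r : ρ.RelIdx) (t : Fin (ρ.arity r) → AA.carrier),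
    t ∈ AA.rel r → (fun i => h (t i)) ∈ BB.rel r

/-- A rigid core: the identity is the only endomorphism. -/
def RelStructOn.RigidCore {ρ : RelSig} (AA : RelStructOn ρ) : Prop :=
  ∀ h : AA.carrier → AA.carrier, RelHom AA AA h → h = id

/-- A core: every endomorphism is injective (for finite structures, an
automorphism). -/
def RelStructOn.Core {ρ : RelSig} (AA : RelStructOn ρ) : Prop :=
  ∀ h : AA.carrier → AA.carrier, RelHom AA AA h → Function.Injective h

/-- A polymorphism: an operation preserving all relations of the structure. -/
def RelStructOn.IsPolymorphism {ρ : RelSig} (AA : RelStructOn ρ) {n : ℕ}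
    (f : (Fin n → AA.carrier) → AA.carrier) : Prop :=
  ∀ (r : ρ.RelIdx) (ts : Fin n → Fin (ρ.arity r) → AA.carrier),
    (∀ k, ts k ∈ AA.rel r) → (fun i => f fun k => ts k i) ∈ AA.rel r

/-- The signature of the polymorphism algebra of `AA`. -/
def RelStructOn.polySig {ρ : RelSig} (AA : RelStructOn ρ) : Signature where
  ops := Σ n : ℕ, {f : (Fin n → AA.carrier) → AA.carrier // AA.IsPolymorphism f}
  arity p := p.1

/-- The polymorphism algebra of `AA`, associated by the Galois correspondence. -/
def RelStructOn.polyAlg {ρ : RelSig} (AA : RelStructOn ρ) :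
    AlgebraOn AA.polySig AA.carrier where
  interp f args := f.2.1 args

/-- The signature of the idempotent polymorphisms of `AA`. -/
def RelStructOn.idemPolySig {ρ : RelSig} (AA : RelStructOn ρ) : Signature where
  ops := Σ n : ℕ, {f : (Fin n → AA.carrier) → AA.carrier //
    AA.IsPolymorphism f ∧ ∀ a, f (fun _ => a) = a}
  arity p := p.1

/-- The algebra of idempotent polymorphisms of `AA`. -/
def RelStructOn.idemPolyAlg {ρ : RelSig} (AA : RelStructOn ρ) :
    AlgebraOn AA.idemPolySig AA.carrier where
  interp f args := f.2.1 args

/-- An SD(∧) template: a rigid core whose polymorphism algebra generates a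
congruence meet semidistributive variety. -/
def RelStructOn.SDMeetTemplate {ρ : RelSig} (AA : RelStructOn ρ) : Prop :=
  AA.RigidCore ∧ InSDMeetVariety AA.polyAlg

/-- `AA` has bounded width (is solvable by local consistency checking):
`AA` is homomorphically equivalent to a finite core whose idempotent polymorphism
algebra generates an SD(∧) variety; this is the standard algebraic
characterization of bounded width for templates that need not be cores. -/
def RelStructOn.BoundedWidth {ρ : RelSig} (AA : RelStructOn ρ) : Prop :=
  ∃ BB : RelStructOn ρ, Finite BB.carrier ∧
    (∃ g, RelHom AA BB g) ∧ (∃ g, RelHom BB AA g) ∧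
    BB.Core ∧ InSDMeetVariety BB.idemPolyAlg

end BW

namespace BW

namespace PQAux

variable {A : Type} {I : Inst A}

/-- One-step propagation through a single step of a path. -/
def stepFwd (s : Step I) (B : Set A) : Set A :=
  {b | ∃ u, u ∈ I.rel s.c ∧ (∀ i, u i ∈ I.potato (I.scope s.c i)) ∧
      u s.inIdx ∈ B ∧ u s.outIdx = b}

/-- Propagation along a list of steps. -/
def listFwd (l : List (Step I)) (B : Set A) : Set A :=
  l.foldl (fun S s => stepFwd s S) B

lemma listFwd_nil (B : Set A) : listFwd ([] : List (Step I)) B = B := rfl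

lemma listFwd_cons (s : Step I) (l : List (Step I)) (B : Set A) :
    listFwd (s :: l) B = listFwd l (stepFwd s B) := rfl

lemma listFwd_append (l₁ l₂ : List (Step I)) (B : Set A) :
    listFwd (l₁ ++ l₂) B = listFwd l₂ (listFwd l₁ B) := by
  simp [listFwd, List.foldl_append]

/-- Building a path with explicit successor length. -/
def mkPath (n : ℕ) (stp : Fin (n + 1) → Step I)
    (ch : ∀ (k : ℕ) (h : k + 1 < n + 1),
      (stp ⟨k, Nat.lt_of_succ_lt h⟩).dst = (stp ⟨k + 1, h⟩).src) : PathIn I :=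
  ⟨n + 1, Nat.succ_pos n, stp, ch⟩

end PQAux

end BW
namespace BW
namespace PQAux

variable {A : Type} {I : Inst A}

@[simp] lemma mkPath_len (n : ℕ) (stp : Fin (n + 1) → Step I) (ch) :
    (mkPath n stp ch).len = n + 1 := rfl

@[simp] lemma mkPath_step (n : ℕ) (stp : Fin (n + 1) → Step I) (ch) :
    (mkPath n stp ch).step = stp := rfl

lemma fwd_mkPath_zero (stp : Fin 1 → Step I) (ch) (B : Set A) :
    (mkPath 0 stp ch).fwd B = stepFwd (stp ⟨0, Nat.one_pos⟩) B := by
  ext b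
  constructor
  · rintro ⟨t, ⟨hrel, hpot, -⟩, hfirst, hlast⟩
    exact ⟨t ⟨0, Nat.one_pos⟩, hrel _, hpot _, hfirst, hlast⟩
  · rintro ⟨u, hurel, hupot, huin, huout⟩
    refine ⟨Fin.cases u (fun i => i.elim0), ⟨?_, ?_, ?_⟩, ?_, ?_⟩
    · intro k
      obtain rfl : k = ⟨0, Nat.one_pos⟩ := Subsingleton.elim (α := Fin 1) _ _
      exact hurel
    · intro k i
      obtain rfl : k = ⟨0, Nat.one_pos⟩ := Subsingleton.elim (α := Fin 1) _ _
      exact hupot i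
    · intro k h
      simp only [mkPath_len] at h
      omega
    · exact huin
    · exact huout
end PQAux
end BW
namespace BW
namespace PQAux

variable {A : Type} {I : Inst A}

lemma fwd_mkPath_succ (n : ℕ) (stp : Fin (n + 2) → Step I) (ch) (B : Set A) :
    (mkPath (n + 1) stp ch).fwd B =
      (mkPath n (fun k => stp k.succ)
        (fun k h => ch (k + 1) (Nat.succ_lt_succ h))).fwd
          (stepFwd (stp ⟨0, by omega⟩) B) := by
  ext b
  constructor
  · rintro ⟨t, ⟨hrel, hpot, hchain⟩, hfirst, hlast⟩
    refine ⟨fun k => t k.succ, ⟨?_, ?_, ?_⟩, ?_, ?_⟩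
    · intro k; exact hrel k.succ
    · intro k i; exact hpot k.succ i
    · intro k h
      exact hchain (k + 1) (by simp only [mkPath_len] at h ⊢; omega)
    · exact ⟨t ⟨0, Nat.succ_pos _⟩, hrel _, hpot _, hfirst,
        hchain 0 (by simp only [mkPath_len]; omega)⟩
    · exact hlast
  · rintro ⟨t', ⟨hrel', hpot', hchain'⟩, hfirst', hlast'⟩
    obtain ⟨u, hurel, hupot, huin, huout⟩ := hfirst'
    refine ⟨Fin.cases u t', ⟨?_, ?_, ?_⟩, ?_, ?_⟩
    · intro k
      induction k using Fin.cases with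
      | zero => exact hurel
      | succ i => exact hrel' i
    · intro k i
      induction k using Fin.cases with
      | zero => exact hupot i
      | succ j => exact hpot' j i
    · intro k h
      match k with
      | 0 => exact huout
      | (k + 1) =>
        exact hchain' k (by simp only [mkPath_len] at h ⊢; omega)
    · exact huin
    · exact hlast'
end PQAux
end BW
namespace BW
namespace PQAux

variable {A : Type} {I : Inst A}

lemma fwd_mkPath (n : ℕ) : ∀ (stp : Fin (n + 1) → Step I) (ch) (B : Set A),
    (mkPath n stp ch).fwd B = listFwd (List.ofFn stp) B := by
  induction n with
  | zero =>
    intro stp ch B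
    rw [fwd_mkPath_zero, List.ofFn_succ, List.ofFn_zero, listFwd_cons, listFwd_nil]
    rfl
  | succ n ih =>
    intro stp ch B
    rw [fwd_mkPath_succ n stp ch B, ih]
    conv_rhs => rw [List.ofFn_succ, listFwd_cons]
    rfl

end PQAux
end BW
namespace BW
namespace PQAux

variable {A : Type} {I : Inst A}

/-- A normalized copy of a path, with length presented as `len - 1 + 1`. -/
def copy (p : PathIn I) : PathIn I :=
  mkPath (p.len - 1) (fun k => p.step ⟨k.1, by have := p.pos; have := k.isLt; omega⟩)
    (fun k h => p.chain k (by have := p.pos; omega))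

lemma fwd_copy (p : PathIn I) (B : Set A) : (copy p).fwd B = p.fwd B := by
  have hpos := p.pos
  ext b
  constructor
  · -- run of copy gives run of p
    rintro ⟨t, ⟨hrel, hpot, hchain⟩, hfirst, hlast⟩
    refine ⟨fun k => t ⟨k.1, show k.1 < p.len - 1 + 1 by have := k.isLt; omega⟩,
      ⟨?_, ?_, ?_⟩, ?_, ?_⟩
    · intro k; exact hrel ⟨k.1, show k.1 < p.len - 1 + 1 by have := k.isLt; omega⟩
    · intro k i; exact hpot ⟨k.1, show k.1 < p.len - 1 + 1 by have := k.isLt; omega⟩ i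
    · intro k h
      exact hchain k (show k + 1 < p.len - 1 + 1 by omega)
    · exact hfirst
    · exact hlast
  · -- run of p gives run of copy
    rintro ⟨t, ⟨hrel, hpot, hchain⟩, hfirst, hlast⟩
    refine ⟨fun k => t ⟨k.1, by have h2 : (k : ℕ) < p.len - 1 + 1 := k.isLt; omega⟩,
      ⟨?_, ?_, ?_⟩, ?_, ?_⟩
    · intro k; exact hrel _
    · intro k i; exact hpot _ i
    · intro k h
      have h2 : k + 1 < p.len - 1 + 1 := h
      exact hchain k (by omega)
    · exact hfirst
    · exact hlast

lemma ofFn_copy (p : PathIn I) : List.ofFn (copy p).step = List.ofFn p.step := by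
  have hpos := p.pos
  apply List.ext_getElem
  · simp [copy]; omega
  · intro i h1 h2
    simp only [List.getElem_ofFn]
    rfl

lemma fwd_eq_listFwd (p : PathIn I) (B : Set A) :
    p.fwd B = listFwd (List.ofFn p.step) B := by
  rw [← fwd_copy p B, ← ofFn_copy p]
  exact fwd_mkPath _ _ _ B

end PQAux
end BW
namespace BW
namespace PQAux

variable {A : Type} {I : Inst A}

/-- Concatenation of two path-patterns, when the end of `p` is the beginning of `q`. -/
def concat (p q : PathIn I) (h : p.dst = q.src) : PathIn I where
  len := p.len + q.len
  pos := by have := p.pos; omega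
  step := fun k =>
    if hk : (k : ℕ) < p.len then p.step ⟨k, hk⟩
    else q.step ⟨(k : ℕ) - p.len, by have := k.isLt; omega⟩
  chain := by
    intro k hk
    by_cases h1 : k + 1 < p.len
    · simp only [dif_pos h1, dif_pos (Nat.lt_of_succ_lt h1)]
      exact p.chain k h1
    · by_cases h2 : (k : ℕ) < p.len
      · have hk1 : k + 1 = p.len := by omega
        simp only [dif_pos h2, dif_neg (show ¬ (k + 1 < p.len) by omega)]
        have e1 : (⟨k, h2⟩ : Fin p.len) = ⟨p.len - 1, by have := p.pos; omega⟩ :=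
          Fin.ext (by simp; omega)
        have e2 : (⟨k + 1 - p.len, by have := q.pos; omega⟩ : Fin q.len)
            = ⟨0, q.pos⟩ := Fin.ext (by simp; omega)
        rw [e1, e2]
        exact h
      · simp only [dif_neg h2, dif_neg (show ¬ (k + 1 < p.len) by omega)]
        have e2 : (⟨k + 1 - p.len, by have := q.pos; have := hk; omega⟩ : Fin q.len)
            = ⟨(k - p.len) + 1, by omega⟩ := Fin.ext (by simp; omega)
        rw [e2]
        exact q.chain (k - p.len) (by omega)

lemma concat_src (p q : PathIn I) (h : p.dst = q.src) :
    (concat p q h).src = p.src := by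
  unfold PathIn.src
  show ((if hk : (0 : ℕ) < p.len then _ else _ : Step I)).src = _
  rw [dif_pos p.pos]

lemma concat_dst (p q : PathIn I) (h : p.dst = q.src) :
    (concat p q h).dst = q.dst := by
  have hp := p.pos; have hq := q.pos
  unfold PathIn.dst
  show ((if hk : ((p.len + q.len - 1 : ℕ)) < p.len then _ else _ : Step I)).dst = _
  rw [dif_neg (show ¬ (p.len + q.len - 1 < p.len) by omega)]
  simp only [show (concat p q h).len = p.len + q.len from rfl,
    show p.len + q.len - 1 - p.len = q.len - 1 by omega]

lemma ofFn_concat (p q : PathIn I) (h : p.dst = q.src) :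
    List.ofFn (concat p q h).step = List.ofFn p.step ++ List.ofFn q.step := by
  apply List.ext_getElem
  · simp [concat]
  · intro i h1 h2
    simp only [List.getElem_ofFn]
    by_cases hi : i < p.len
    · rw [List.getElem_append_left (by simpa using hi)]
      simp only [List.getElem_ofFn]
      show (if hk : _ then _ else _) = _
      rw [dif_pos hi]
    · rw [List.getElem_append_right (by simpa using hi)]
      simp only [List.getElem_ofFn]
      show (if hk : _ then _ else _) = _
      rw [dif_neg hi]
      congr 1
      exact Fin.ext (by simp)

lemma fwd_concat (p q : PathIn I) (h : p.dst = q.src) (B : Set A) :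
    (concat p q h).fwd B = q.fwd (p.fwd B) := by
  rw [fwd_eq_listFwd, ofFn_concat, listFwd_append, ← fwd_eq_listFwd, ← fwd_eq_listFwd]

end PQAux
end BW
namespace BW
namespace PQAux

variable {A : Type} {I : Inst A}

/-- Powers of a cycle: `cycPow c h k` is the concatenation of `k+1` copies of `c`. -/
def cycPow (c : PathIn I) (h : c.dst = c.src) :
    ℕ → {p : PathIn I // p.src = c.src ∧ p.dst = c.dst}
  | 0 => ⟨c, rfl, rfl⟩
  | k + 1 =>
    ⟨concat (cycPow c h k).1 c ((cycPow c h k).2.2.trans h),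
      by rw [concat_src]; exact (cycPow c h k).2.1,
      by rw [concat_dst]⟩

lemma cycPow_fwd (c : PathIn I) (h : c.dst = c.src) :
    ∀ (k : ℕ) (B : Set A), ((cycPow c h k).1).fwd B = (c.fwd)^[k + 1] B := by
  intro k
  induction k with
  | zero => intro B; simp [cycPow]
  | succ k ih =>
    intro B
    show (concat (cycPow c h k).1 c ((cycPow c h k).2.2.trans h)).fwd B = _
    rw [fwd_concat, ih, ← Function.iterate_succ_apply' c.fwd]

/-- Monotonicity of propagation. -/
lemma fwd_mono (p : PathIn I) {B C : Set A} (h : B ⊆ C) : p.fwd B ⊆ p.fwd C := by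
  rintro b ⟨t, ht, hf, hl⟩
  exact ⟨t, ht, h hf, hl⟩

/-- Propagation lands in the potato of the end variable. -/
lemma fwd_subset_potato (p : PathIn I) (B : Set A) :
    p.fwd B ⊆ I.potato p.dst := by
  rintro b ⟨t, ⟨-, hpot, -⟩, -, rfl⟩
  exact hpot _ _

end PQAux
end BW
namespace BW
namespace PQAux

variable {A : Type} {I : Inst A}

lemma key {A : Type} [Finite A] (I : Inst A) (hpq : I.PQ) (x : I.Var)
    (p q : PathIn I) (hp1 : p.src = x) (hp2 : p.dst = x)
    (hq1 : q.src = x) (hq2 : q.dst = x)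
    (a : A) (ha : a ∈ I.potato x) :
    ∃ (N : ℕ) (A' : Set A), a ∈ A' ∧ p.fwd A' = A' ∧
      ∀ j ≥ N, (fun S => q.fwd (p.fwd S))^[j] ({a} : Set A) = A' := by
  set F : Set A → Set A := fun S => q.fwd (p.fwd S) with hF
  have hFmono : Monotone F := fun S T h => fwd_mono q (fwd_mono p h)
  set S : ℕ → Set A := fun j => F^[j] ({a} : Set A) with hS
  have hSd : ∀ j, S j = F^[j] ({a} : Set A) := fun _ => rfl
  -- basic cycle c = p + q
  have hcpq : p.dst = q.src := hp2.trans hq1.symm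
  set c : PathIn I := concat p q hcpq with hc
  have hcsrc : c.src = x := by rw [hc, concat_src]; exact hp1
  have hcdst : c.dst = x := by rw [hc, concat_dst]; exact hq2
  have hccyc : c.dst = c.src := hcdst.trans hcsrc.symm
  have hcfun : c.fwd = F := funext fun B => by rw [hc, fwd_concat]
  -- additivity of the return set
  have hM_add : ∀ m m', a ∈ S m → a ∈ S m' → a ∈ S (m + m') := by
    intro m m' hm hm'
    have h1 : S (m + m') = F^[m'] (F^[m] ({a} : Set A)) := by
      rw [hSd, Nat.add_comm, Function.iterate_add_apply]
    rw [h1]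
    have h2 : ({a} : Set A) ⊆ F^[m] {a} := Set.singleton_subset_iff.mpr hm
    exact (hFmono.iterate m') h2 hm'
  -- a return value m0 ≥ 1
  have hm0 : ∃ m, 1 ≤ m ∧ a ∈ S m := by
    obtain ⟨j, hj⟩ := hpq.2.2 x c c hcsrc hcdst hcsrc hcdst a ha
    refine ⟨2 * j + 1, by omega, ?_⟩
    have e1 : (fun T => c.fwd (c.fwd T)) = F^[2] := by
      funext T
      rw [hcfun]
      simp [Function.iterate_succ, Function.comp]
    rw [e1, hcfun, ← Function.iterate_mul] at hj
    rw [hSd, show 2 * j + 1 = 1 + 2 * j by omega, Function.iterate_add_apply,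
      Function.iterate_one]
    exact hj
  -- return values ≡ 1 mod d for every d ≥ 2
  have hmd : ∀ d, 2 ≤ d → ∃ m, a ∈ S m ∧ m % d = 1 % d := by
    intro d hd
    set Q : PathIn I := (cycPow c hccyc (d - 2)).1 with hQ
    have hQsrc : Q.src = x := (cycPow c hccyc (d - 2)).2.1.trans hcsrc
    have hQdst : Q.dst = x := (cycPow c hccyc (d - 2)).2.2.trans hcdst
    obtain ⟨j, hj⟩ := hpq.2.2 x c Q hcsrc hcdst hQsrc hQdst a ha
    refine ⟨d * j + 1, ?_, by rw [show d * j + 1 = 1 + d * j by ring,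
      Nat.add_mul_mod_self_left]⟩
    have e1 : (fun T => Q.fwd (c.fwd T)) = F^[d] := by
      funext T
      rw [hQ, cycPow_fwd, hcfun]
      rw [← Function.iterate_succ_apply]
      congr 1
      omega
    rw [e1, hcfun, ← Function.iterate_mul] at hj
    rw [hSd, show d * j + 1 = 1 + d * j by omega, Function.iterate_add_apply,
      Function.iterate_one]
    exact hj
  -- multiples of return values are return values
  obtain ⟨m0, hm0ge, hm0mem⟩ := hm0
  have hmul : ∀ t : ℕ, a ∈ S ((t + 1) * m0) := by
    intro t
    induction t with
    | zero => simpa using hm0mem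
    | succ t ih =>
      have : (t + 2) * m0 = (t + 1) * m0 + m0 := by ring
      rw [this]
      exact hM_add _ _ ih hm0mem
  -- pigeonhole: the sequence S is eventually periodic
  obtain ⟨i0, j0, hne, heq⟩ := Finite.exists_ne_map_eq_of_infinite S
  obtain ⟨N1, dd, hdd, hNeq⟩ : ∃ N1 dd, 1 ≤ dd ∧ S (N1 + dd) = S N1 := by
    rcases lt_or_gt_of_ne hne with hlt | hgt
    · exact ⟨i0, j0 - i0, by omega,
        by rw [show i0 + (j0 - i0) = j0 by omega]; exact heq.symm⟩
    · exact ⟨j0, i0 - j0, by omega,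
        by rw [show j0 + (i0 - j0) = i0 by omega]; exact heq⟩
  -- periodicity from N1 on, with period dd
  have hper : ∀ t, S (N1 + dd + t) = S (N1 + t) := by
    intro t
    have h1 : S (N1 + dd + t) = F^[t] (S (N1 + dd)) := by
      rw [hSd, hSd, show N1 + dd + t = t + (N1 + dd) by omega,
        Function.iterate_add_apply]
    have h2 : S (N1 + t) = F^[t] (S N1) := by
      rw [hSd, hSd, show N1 + t = t + N1 by omega, Function.iterate_add_apply]
    rw [h1, h2, hNeq]
  have hper_mult : ∀ n, N1 ≤ n → ∀ t, S (n + dd * t) = S n := by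
    intro n hn t
    induction t with
    | zero => simp
    | succ t ih =>
      have e1 : n + dd * (t + 1) = N1 + dd + (n + dd * t - N1) := by
        have : N1 ≤ n + dd * t := by omega
        ring_nf
        omega
      rw [e1, hper, show N1 + (n + dd * t - N1) = n + dd * t by omega, ih]
  -- a return value m ≥ N1 + 1 with m ≡ 1 mod dd
  obtain ⟨m, hmmem, hmge, hmmod⟩ :
      ∃ m, a ∈ S m ∧ N1 + 1 ≤ m ∧ m % dd = 1 % dd := by
    rcases Nat.lt_or_ge dd 2 with hdd2 | hdd2
    · -- dd = 1
      refine ⟨(N1 + 1) * m0, ?_, ?_, ?_⟩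
      · have := hmul N1; simpa using this
      · have : N1 + 1 ≤ (N1 + 1) * m0 := Nat.le_mul_of_pos_right _ (by omega)
        omega
      · interval_cases dd
        simp [Nat.mod_one]
    · obtain ⟨md, hmdmem, hmdmod⟩ := hmd dd hdd2
      refine ⟨md + dd * ((N1 + 1) * m0), ?_, ?_, ?_⟩
      · have h4 : 1 ≤ dd * (N1 + 1) := Nat.mul_pos (by omega) (by omega)
        have h3 : a ∈ S (dd * ((N1 + 1) * m0)) := by
          have e : ((dd * (N1 + 1) - 1) + 1) * m0 = dd * ((N1 + 1) * m0) := by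
            rw [Nat.sub_add_cancel h4, mul_assoc]
          exact e ▸ hmul _
        exact hM_add _ _ hmdmem h3
      · have h5 : N1 + 1 ≤ dd * ((N1 + 1) * m0) := by
          calc N1 + 1 ≤ (N1 + 1) * m0 := Nat.le_mul_of_pos_right _ (by omega)
          _ ≤ dd * ((N1 + 1) * m0) := Nat.le_mul_of_pos_left _ (by omega)
        omega
      · rw [Nat.add_mul_mod_self_left, hmdmod]
  -- the sequence is increasing from N1 on
  have hinc : ∀ n, N1 ≤ n → S n ⊆ S (n + 1) := by
    intro n hn
    have h1 : S n ⊆ S (n + m) := by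
      have e1 : S (n + m) = F^[n] (S m) := by
        rw [hSd, hSd, ← Function.iterate_add_apply]
      rw [e1, hSd]
      exact (hFmono.iterate n) (Set.singleton_subset_iff.mpr hmmem)
    have hdvd : dd ∣ m - 1 := by
      have h2 : 1 ≤ m := by omega
      exact (Nat.modEq_iff_dvd' h2).mp (hmmod.symm : Nat.ModEq dd 1 m)
    obtain ⟨t, ht⟩ := hdvd
    have e2 : n + m = (n + 1) + dd * t := by
      rw [← ht]; omega
    have e3 : S (n + m) = S (n + 1) := by
      rw [e2]
      exact hper_mult (n + 1) (by omega) t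
    rw [← e3]
    exact h1
  have hchain : ∀ n n', N1 ≤ n → n ≤ n' → S n ⊆ S n' := by
    intro n n' hn hle
    induction n' with
    | zero =>
      have hn0 : n = 0 := by omega
      subst hn0
      exact subset_rfl
    | succ n' ih =>
      rcases Nat.lt_or_ge n (n' + 1) with h | h
      · have h2 : n ≤ n' := by omega
        exact (ih h2).trans (hinc n' (by omega))
      · have : n = n' + 1 := by omega
        subst this
        exact subset_rfl
  have hconst : ∀ n, N1 ≤ n → S n = S N1 := by
    intro n hn
    apply Set.Subset.antisymm
    · have h1 : S n ⊆ S (N1 + dd * n) := by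
        apply hchain n (N1 + dd * n) hn
        calc n ≤ dd * n := Nat.le_mul_of_pos_left _ (by omega)
        _ ≤ N1 + dd * n := by omega
      rw [hper_mult N1 le_rfl n] at h1
      exact h1
    · exact hchain N1 n le_rfl hn
  -- the stable set
  set A' : Set A := S N1 with hA'
  have hSA' : ∀ j, N1 ≤ j → S j = A' := fun j hj => hconst j hj
  have haA' : a ∈ A' := by
    rw [← hSA' m (by omega)]
    exact hmmem
  have hFA' : F A' = A' := by
    have : F A' = S (N1 + 1) := by
      rw [hSd, hA', hSd, Function.iterate_succ_apply']
    rw [this, hSA' (N1 + 1) (by omega)]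
  have hFiterA' : ∀ j, F^[j] A' = A' := by
    intro j
    induction j with
    | zero => rfl
    | succ j ih => rw [Function.iterate_succ_apply', ih, hFA']
  have hA'pot : A' ⊆ I.potato x := by
    have h1 : A' = S (N1 + 1) := (hSA' (N1 + 1) (by omega)).symm
    rw [h1, hSd, Function.iterate_succ_apply']
    refine (fwd_subset_potato q _).trans ?_
    rw [hq2]
  have hAB : A' ⊆ p.fwd A' := by
    intro b hb
    obtain ⟨jb, hjb⟩ := hpq.2.2 x p q hp1 hp2 hq1 hq2 b (hA'pot hb)
    refine fwd_mono p ?_ hjb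
    calc (fun S => q.fwd (p.fwd S))^[jb] {b}
        ⊆ (fun S => q.fwd (p.fwd S))^[jb] A' :=
          (hFmono.iterate jb) (Set.singleton_subset_iff.mpr hb)
      _ = A' := hFiterA' jb
  have hBA : p.fwd A' ⊆ A' := by
    intro b hb
    have hbpot : b ∈ I.potato x := by
      have := fwd_subset_potato p A' hb
      rwa [hp2] at this
    obtain ⟨jb, hjb⟩ := hpq.2.2 x q p hq1 hq2 hp1 hp2 b hbpot
    have hGB : ∀ j, (fun S => p.fwd (q.fwd S))^[j] {b} ⊆ p.fwd A' := by
      intro j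
      induction j with
      | zero => exact Set.singleton_subset_iff.mpr hb
      | succ j ih =>
        rw [Function.iterate_succ_apply']
        refine (fwd_mono p (fwd_mono q ih)).trans ?_
        have e1 : q.fwd (p.fwd A') = A' := hFA'
        rw [e1]
    have h2 : b ∈ q.fwd (p.fwd A') := fwd_mono q (hGB jb) hjb
    have e1 : q.fwd (p.fwd A') = A' := hFA'
    rwa [e1] at h2
  exact ⟨N1, A', haA', Set.Subset.antisymm hBA hAB, fun j hj => hSA' j hj⟩

end PQAux
end BW
namespace BW

/-- Let `I` be a pq instance, `x` a variable, `a ∈ A_x`, and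
`p`, `q` path-patterns that are cycles at `x` in `I`.  Then there exists `k` such
that for every `j ≥ k`, `a ∈ {a} + j(p+q) + p`; in particular a single `j` can be
chosen that works simultaneously for all `a ∈ A_x`.  Moreover the sequence
`{a}, {a}+(p+q), {a}+2(p+q), …` stabilises at a set `A'` with `a ∈ A'` and
`A' + p = A'`. -/
theorem pq_instance_propagation_stabilises
    {A : Type} [Finite A] (I : Inst A) [Finite I.Var] [Finite I.Cons]
    (hpq : I.PQ)
    (x : I.Var) (a : A) (ha : a ∈ I.potato x)
    (p q : PathIn I) (hp1 : p.src = x) (hp2 : p.dst = x)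
    (hq1 : q.src = x) (hq2 : q.dst = x) :
    (∃ k : ℕ, ∀ j ≥ k, a ∈ p.fwd ((fun S => q.fwd (p.fwd S))^[j] ({a} : Set A))) ∧
    (∃ j : ℕ, ∀ b ∈ I.potato x,
      b ∈ p.fwd ((fun S => q.fwd (p.fwd S))^[j] ({b} : Set A))) ∧
    ∃ A' : Set A, a ∈ A' ∧ p.fwd A' = A' ∧
      ∃ N : ℕ, ∀ j ≥ N, (fun S => q.fwd (p.fwd S))^[j] ({a} : Set A) = A' := by
  classical
  -- uniform statement for a single element of the potato
  have huni : ∀ b ∈ I.potato x, ∃ k : ℕ, ∀ j ≥ k,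
      b ∈ p.fwd ((fun S => q.fwd (p.fwd S))^[j] ({b} : Set A)) := by
    intro b hb
    obtain ⟨N, A', hbA', hpA', hstab⟩ := PQAux.key I hpq x p q hp1 hp2 hq1 hq2 b hb
    refine ⟨N, fun j hj => ?_⟩
    rw [hstab j hj, hpA']
    exact hbA'
  obtain ⟨N, A', haA', hpA', hstab⟩ := PQAux.key I hpq x p q hp1 hp2 hq1 hq2 a ha
  refine ⟨?_, ?_, A', haA', hpA', N, hstab⟩
  · refine ⟨N, fun j hj => ?_⟩
    rw [hstab j hj, hpA']
    exact haA'
  · -- a single j works for all of the potato, by finiteness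
    have := Fintype.ofFinite A
    choose! k hk using huni
    refine ⟨Finset.univ.sup k, fun b hb => ?_⟩
    exact hk b hb _ (Finset.le_sup (Finset.mem_univ b))

end BW
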